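/- The number of sequences of N symbols from {'(', ')'} with an excess of n closing parentheses over opening parentheses equals \binom{N}{(N-n)/2} when N - n is even; and the number of one-boundary half-diagrams of length N with n through lines (allowing left-boundary connections but no right-boundary connections) equals B_{N,n} for N-n even and B_{N,n+1} for N-n odd, where B_{m,k}=\binom{m}{(m-k)/2}. -/

import Mathlib

/-! Let `obdCount N n p s` count the words of length `N` with `n` through lines that are
accepted from the state `(p, s)` of `validOBD`. Removing the first letter gives a transfer
recursion, and Pascal's rule `B_{m+1,k+1} = B_{m,k+2} + B_{m,k}` turns it, by induction on `N`,
into closed forms: once a through line has been seen the count is the Temperley–Lieb number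
`B_{N,p+n} - B_{N,p+n+2}`; before that it is `B_{N,p+n} + B_{N,p+n+1}`, the telescoped sum over
the number of `')'` attached to the left boundary. One of these two summands vanishes by parity.
A word in `'('`, `')'` is determined by the positions of its `'('`, whence the binomial
coefficient in the first count. -/

/-- `B m k = binom(m, (m-k)/2)`, interpreted as `0` when `(m-k)/2` is not a
nonnegative integer (i.e. when `k > m` or `m - k` is odd). -/
def ballotB (m k : ℕ) : ℕ :=
  if k ≤ m ∧ (m - k) % 2 = 0 then Nat.choose m ((m - k) / 2) else 0

/-- Validity of a one-boundary half-diagram read as a list of symbols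
(`0` = `'('`, `1` = `')'`, `2` = `'|'` a through line), processed with a state
consisting of the number `p` of currently open `'('`s and a flag `s` recording
whether a through line has been seen.  A `')'` with no open `'('` attaches to
the left boundary (allowed only if no through line has occurred earlier, since
the connection would cross it); a through line is allowed only when no `'('`
is open; at the end every `'('` must be matched. -/
def validOBD : List (Fin 3) → ℕ → Bool → Bool
  | [], p, _ => p == 0
  | c :: t, p, s =>
    if c = 0 then validOBD t (p + 1) s
    else if c = 1 then
      match p with
      | 0 => !s && validOBD t 0 s
      | p' + 1 => validOBD t p' s
    else
      match p with
      | 0 => validOBD t 0 true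
      | _ + 1 => false

open Finset

lemma card_filter_boolFun_card_eq_choose {α : Type*} [Fintype α] [DecidableEq α] (b : Bool)
    (k : ℕ) : #{f : α → Bool | #{i | f i = b} = k} = (Fintype.card α).choose k := by
  rw [← card_univ, ← card_powersetCard]
  refine card_bij' (fun f _ => ({i | f i = b} : Finset α)) (fun t _ i => if i ∈ t then b else !b)
    ?_ ?_ ?_ ?_
  · intro f hf; simpa [mem_powersetCard] using hf
  · intro t ht
    rw [mem_filter, ← (mem_powersetCard.1 ht).2]
    refine ⟨mem_univ _, congrArg card ?_⟩
    ext i; by_cases hi : i ∈ t <;> simp [hi]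
  · intro f _; funext i; cases b <;> cases h : f i <;> simp [h]
  · intro t _; ext i; by_cases hi : i ∈ t <;> simp [hi]

lemma card_filter_eq_true_add_card_filter_eq_false {α : Type*} [Fintype α] (f : α → Bool) :
    #{i | f i = true} + #{i | f i = false} = Fintype.card α := by
  simpa using card_filter_add_card_filter_not (s := (univ : Finset α)) (fun i => f i = true)

lemma card_filter_fin_cons {α : Type*} [Fintype α] {N : ℕ} (P : (Fin (N + 1) → α) → Prop)
    [DecidablePred P] : #{g | P g} = ∑ a, #{g : Fin N → α | P (Fin.cons a g)} := by
  simp only [card_filter]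
  rw [← (Fin.consEquiv fun _ => α).sum_comp, Fintype.sum_prod_type]
  rfl

lemma card_filter_fin_cons_eq {α : Type*} [DecidableEq α] {N : ℕ} (a b : α)
    (g : Fin N → α) :
    #{i | (Fin.cons a g : Fin (N + 1) → α) i = b} = #{i | g i = b} + if a = b then 1 else 0 := by
  simp only [card_filter, Fin.sum_univ_succ, Fin.cons_zero, Fin.cons_succ]
  ring

lemma ballotB_zero_left (k : ℕ) : ballotB 0 k = if k = 0 then 1 else 0 := by
  unfold ballotB; split_ifs <;> simp_all

lemma ballotB_eq_zero_of_odd {m k : ℕ} (h : (m + k) % 2 = 1) : ballotB m k = 0 :=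
  if_neg (by omega)

lemma ballotB_succ_succ (m k : ℕ) :
    ballotB (m + 1) (k + 1) = ballotB m (k + 2) + ballotB m k := by
  unfold ballotB
  by_cases hk : k + 1 ≤ m + 1 ∧ (m - k) % 2 = 0
  · rcases Nat.eq_or_lt_of_le hk.1 with heq | hlt
    · obtain rfl : k = m := by omega
      simp
    · rw [if_pos (by omega), if_pos (by omega), if_pos (by omega),
        show (m + 1 - (k + 1)) / 2 = (m - (k + 2)) / 2 + 1 by omega,
        show (m - k) / 2 = (m - (k + 2)) / 2 + 1 by omega, Nat.choose_succ_succ']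
  · rw [if_neg (by omega), if_neg (by omega), if_neg (by omega)]

lemma ballotB_succ_zero (m : ℕ) : ballotB (m + 1) 0 = 2 * ballotB m 1 := by
  unfold ballotB
  obtain ⟨j, rfl | rfl⟩ := Nat.even_or_odd' m
  · rw [if_neg (by omega), if_neg (by omega)]
  · rw [if_pos (by omega), if_pos (by omega), show (2 * j + 1 + 1 - 0) / 2 = j + 1 by omega,
      show (2 * j + 1 - 1) / 2 = j by omega, Nat.choose_succ_succ', Nat.choose_symm_half]
    ring

def obdCount (N n p : ℕ) (s : Bool) : ℕ :=
  #{g : Fin N → Fin 3 | #{i | g i = 2} = n ∧ validOBD (List.ofFn g) p s = true}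

lemma obdCount_zero_left (n p : ℕ) (s : Bool) :
    obdCount 0 n p s = if n = 0 ∧ p = 0 then 1 else 0 := by
  unfold obdCount
  by_cases h : n = 0 ∧ p = 0
  · obtain ⟨rfl, rfl⟩ := h
    simp [validOBD]
  · rw [if_neg h, card_eq_zero, filter_eq_empty_iff]
    intro g _
    simp only [univ_eq_empty, filter_empty, card_empty, List.ofFn_zero, validOBD, beq_iff_eq]
    omega

lemma obdCount_succ (N n p : ℕ) (s : Bool) :
    obdCount (N + 1) n p s =
      #{g : Fin N → Fin 3 | #{i | g i = 2} = n ∧ validOBD (0 :: List.ofFn g) p s} +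
      #{g : Fin N → Fin 3 | #{i | g i = 2} = n ∧ validOBD (1 :: List.ofFn g) p s} +
      #{g : Fin N → Fin 3 | #{i | g i = 2} + 1 = n ∧ validOBD (2 :: List.ofFn g) p s} := by
  simp [obdCount, card_filter_fin_cons (N := N), Fin.sum_univ_three, card_filter_fin_cons_eq,
    List.ofFn_succ]

lemma obdCount_succ_open_succ (N n p : ℕ) (s : Bool) :
    obdCount (N + 1) n (p + 1) s = obdCount N n (p + 2) s + obdCount N n p s := by
  rw [obdCount_succ]
  simp [validOBD, obdCount]

lemma obdCount_succ_open_zero (N n : ℕ) (s : Bool) :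
    obdCount (N + 1) n 0 s = obdCount N n 1 s + (if s then 0 else obdCount N n 0 s) +
      (if n = 0 then 0 else obdCount N (n - 1) 0 true) := by
  rw [obdCount_succ]
  cases s <;> rcases n with _ | n <;> simp [validOBD, obdCount]

-- `obdCount N n p true = B_{N,p+n} - B_{N,p+n+2}`, stated without truncated subtraction.
theorem obdCount_true_add_ballotB (N n p : ℕ) :
    obdCount N n p true + ballotB N (p + n + 2) = ballotB N (p + n) := by
  induction N generalizing n p with
  | zero =>
    simp only [obdCount_zero_left, ballotB_zero_left]
    split_ifs <;> simp_all
  | succ N ih =>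
    rcases p with _ | p
    · rcases n with _ | n
      · have ih₁ := ih 0 1
        have pascal₁ := ballotB_succ_succ N 1
        have pascal₂ := ballotB_succ_zero N
        simp only [obdCount_succ_open_zero, ↓reduceIte, add_zero]
        ring_nf at ih₁ pascal₁ pascal₂ ⊢
        omega
      · have ih₁ := ih (n + 1) 1
        have ih₂ := ih n 0
        have pascal₁ := ballotB_succ_succ N (n + 2)
        have pascal₂ := ballotB_succ_succ N n
        simp only [obdCount_succ_open_zero, ↓reduceIte, add_zero, Nat.add_eq_zero_iff,
          one_ne_zero, and_false, add_tsub_cancel_right]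
        ring_nf at ih₁ ih₂ pascal₁ pascal₂ ⊢
        omega
    · have ih₁ := ih n (p + 2)
      have ih₂ := ih n p
      have pascal₁ := ballotB_succ_succ N (p + n + 2)
      have pascal₂ := ballotB_succ_succ N (p + n)
      rw [obdCount_succ_open_succ]
      ring_nf at ih₁ ih₂ pascal₁ pascal₂ ⊢
      omega

theorem obdCount_false (N n p : ℕ) :
    obdCount N n p false = ballotB N (p + n) + ballotB N (p + n + 1) := by
  induction N generalizing n p with
  | zero =>
    simp only [obdCount_zero_left, ballotB_zero_left]
    split_ifs <;> simp_all
  | succ N ih =>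
    rcases p with _ | p
    · rcases n with _ | n
      · have ih₁ := ih 0 1
        have ih₂ := ih 0 0
        have pascal₁ := ballotB_succ_succ N 0
        have pascal₂ := ballotB_succ_zero N
        simp only [obdCount_succ_open_zero, Bool.false_eq_true, ↓reduceIte, add_zero]
        ring_nf at ih₁ ih₂ pascal₁ pascal₂ ⊢
        omega
      · have ih₁ := ih (n + 1) 1
        have ih₂ := ih (n + 1) 0
        have ih₃ := obdCount_true_add_ballotB N n 0
        have pascal₁ := ballotB_succ_succ N (n + 1)
        have pascal₂ := ballotB_succ_succ N n
        simp only [obdCount_succ_open_zero, Bool.false_eq_true, ↓reduceIte, Nat.add_eq_zero_iff,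
          one_ne_zero, and_false, add_tsub_cancel_right]
        ring_nf at ih₁ ih₂ ih₃ pascal₁ pascal₂ ⊢
        omega
    · have ih₁ := ih n (p + 2)
      have ih₂ := ih n p
      have pascal₁ := ballotB_succ_succ N (p + n + 1)
      have pascal₂ := ballotB_succ_succ N (p + n)
      rw [obdCount_succ_open_succ]
      ring_nf at ih₁ ih₂ pascal₁ pascal₂ ⊢
      omega

/-- (a) The number of sequences of `N` symbols from `{'(', ')'}` with an excess
of `n` closing parentheses equals `binom(N, (N-n)/2)` when `N - n` is even.
(b) The number of one-boundary half-diagrams of length `N` with `n` through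
lines (left-boundary connections allowed, no right-boundary connections)
equals `B_{N,n}` for `N - n` even and `B_{N,n+1}` for `N - n` odd. -/
theorem one_boundary_halfdiagram_count (N n : ℕ) (hn : n ≤ N) :
    ((N - n) % 2 = 0 →
      (Finset.univ.filter (fun f : Fin N → Bool =>
          (Finset.univ.filter (fun i => f i = true)).card
            = (Finset.univ.filter (fun i => f i = false)).card + n)).card
        = Nat.choose N ((N - n) / 2)) ∧
    ((N - n) % 2 = 0 →
      (Finset.univ.filter (fun g : Fin N → Fin 3 =>
          (Finset.univ.filter (fun i => g i = 2)).card = n ∧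
          validOBD (List.ofFn g) 0 false = true)).card = ballotB N n) ∧
    ((N - n) % 2 = 1 →
      (Finset.univ.filter (fun g : Fin N → Fin 3 =>
          (Finset.univ.filter (fun i => g i = 2)).card = n ∧
          validOBD (List.ofFn g) 0 false = true)).card = ballotB N (n + 1)) := by
  have hcount := obdCount_false N n 0
  rw [zero_add] at hcount
  refine ⟨fun hpar => ?_, fun hpar => ?_, fun hpar => ?_⟩
  · have hchoose := card_filter_boolFun_card_eq_choose (α := Fin N) false ((N - n) / 2)
    rw [Fintype.card_fin] at hchoose
    rw [← hchoose]
    refine congrArg card (filter_congr fun f _ => ?_)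
    have hsplit := card_filter_eq_true_add_card_filter_eq_false f
    rw [Fintype.card_fin] at hsplit
    omega
  · rw [← obdCount, hcount, ballotB_eq_zero_of_odd (k := n + 1) (by omega), add_zero]
  · rw [← obdCount, hcount, ballotB_eq_zero_of_odd (k := n) (by omega), zero_add]
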